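/- arXiv:2311.09598 — 9 statements merged into one kernel-verified Lean document; each statement's English description precedes it below -/
import Mathlib

section
/- Suppose p divides k, where k ≥ 2. Let α, β ∈ F_q be nonzero and let C be the 2×2 upper triangular matrix with both diagonal entries equal to β^k and (1,2) entry equal to α. Then there is no matrix A ∈ T_2(F_q) with A^k = C. -/
open Finset

lemma tri_pow_entries {F : Type*} [Field F] (A : Matrix (Fin 2) (Fin 2) F)
    (h : A 1 0 = 0) (n : ℕ) :
    (A ^ n) 0 0 = A 0 0 ^ n ∧ (A ^ n) 1 0 = 0 ∧ (A ^ n) 1 1 = A 1 1 ^ n ∧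
      (A ^ n) 0 1 = A 0 1 * ∑ i ∈ range n, A 0 0 ^ i * A 1 1 ^ (n - 1 - i) := by
  induction n with
  | zero => simp [Matrix.one_apply]
  | succ n ih =>
    obtain ⟨h00, h10, h11, h01⟩ := ih
    rw [pow_succ]
    refine ⟨?_, ?_, ?_, ?_⟩ <;>
      simp [Matrix.mul_apply, Fin.sum_univ_two, h00, h10, h11, h01, h, pow_succ]
    have key : ∀ i ∈ range n, A 0 0 ^ i * A 1 1 ^ (n - 1 - i) * A 1 1
        = A 0 0 ^ i * A 1 1 ^ (n - i) := by
      intro i hi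
      simp only [mem_range] at hi
      rw [mul_assoc, ← pow_succ]
      congr 2
      omega
    rw [sum_range_succ, mul_assoc, sum_mul, sum_congr rfl key, Nat.sub_self, pow_zero]
    ring

/-- If `p ∣ k`, the matrix `[[β^k, α], [0, β^k]]` with `α, β ≠ 0` is not a `k`-th
power of an upper triangular matrix. -/
theorem stmt_3 (k : ℕ) (hk : 2 ≤ k) (F : Type*) [Field F] [Fintype F]
    (hp : (ringChar F : ℕ) ∣ k)
    (α β : F) (hα : α ≠ 0) (hβ : β ≠ 0) :
    ∀ A : Matrix (Fin 2) (Fin 2) F, A.BlockTriangular id →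
      A ^ k ≠ !![β ^ k, α; 0, β ^ k] := by
  intro A hA hAk
  have h10 : A 1 0 = 0 := hA (by norm_num : (id (1 : Fin 2) : Fin 2) > id 0)
  obtain ⟨h00, _, h11, h01⟩ := tri_pow_entries A h10 k
  set a := A 0 0
  set d := A 1 1
  have e00 : a ^ k = β ^ k := by rw [← h00, hAk]; simp
  have e11 : d ^ k = β ^ k := by rw [← h11, hAk]; simp
  have e01 : A 0 1 * ∑ i ∈ range k, a ^ i * d ^ (k - 1 - i) = α := by
    rw [← h01, hAk]; simp
  have hS : (∑ i ∈ range k, a ^ i * d ^ (k - 1 - i)) ≠ 0 := by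
    intro h; rw [h, mul_zero] at e01; exact hα e01.symm
  rcases eq_or_ne a d with heq | hne
  · apply hS
    have : ∀ i ∈ range k, a ^ i * d ^ (k - 1 - i) = a ^ (k - 1) := by
      intro i hi
      rw [← heq, ← pow_add]
      congr 1
      simp only [mem_range] at hi
      omega
    rw [sum_congr rfl this, sum_const, card_range, nsmul_eq_mul]
    have : (k : F) = 0 := by
      haveI := ringChar.charP F
      exact (CharP.cast_eq_zero_iff F (ringChar F) k).mpr hp
    rw [this, zero_mul]
  · apply hS
    have hgeom := geom_sum₂_mul a d k
    rw [e00, ← e11, sub_self] at hgeom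
    exact (mul_eq_zero.mp hgeom).resolve_right (sub_ne_zero.mpr hne)
end

section
/- Let k ≥ 2 and let E ∈ T_2(F_q) be the matrix with zero diagonal and (1,2) entry equal to 1. If there exist matrices A, B ∈ T_2(F_q) with A^k + B^k = E, then −1 is a k-th power in F_q (i.e., there exists x ∈ F_q with x^k = −1). -/
/-!
The diagonal of a power of an upper triangular matrix is the power of its diagonal, so the
diagonal entries satisfy `a ^ k + b ^ k = 0`, and `b / a` is a `k`-th root of `-1` as soon as
some `a ≠ 0`. Otherwise `A` and `B` have zero diagonal, so by Cayley–Hamilton they square to zero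
and `A ^ k + B ^ k = 0` cannot have a `1` in the corner.
-/

namespace Matrix

variable {m R : Type*} [LinearOrder m] [Fintype m]

theorem BlockTriangular.mul_apply_self [NonUnitalNonAssocSemiring R] {M N : Matrix m m R}
    (hM : M.BlockTriangular id) (hN : N.BlockTriangular id) (i : m) :
    (M * N) i i = M i i * N i i := by
  rw [mul_apply, Finset.sum_eq_single i]
  · intro j _ hji
    rcases lt_or_gt_of_ne hji with hlt | hgt
    · rw [hM hlt, zero_mul]
    · rw [hN hgt, mul_zero]
  · simp

theorem BlockTriangular.pow_apply_self [Semiring R] {M : Matrix m m R}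
    (hM : M.BlockTriangular id) (k : ℕ) (i : m) : (M ^ k) i i = M i i ^ k := by
  induction k with
  | zero => simp
  | succ k ih => rw [pow_succ, (hM.pow k).mul_apply_self hM, ih, pow_succ]

theorem BlockTriangular.pow_card_eq_zero_of_diag_eq_zero [CommRing R] {M : Matrix m m R}
    (hM : M.BlockTriangular id) (hdiag : ∀ i, M i i = 0) : M ^ Fintype.card m = 0 := by
  simpa [charpoly_of_isUpperTriangular M hM, hdiag] using aeval_self_charpoly M

end Matrix

theorem exists_pow_eq_neg_one_of_pow_add_pow_eq_zero {F : Type*} [Field F] {k : ℕ} {a b : F}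
    (ha : a ≠ 0) (h : a ^ k + b ^ k = 0) : ∃ x : F, x ^ k = -1 :=
  ⟨b / a, by rw [div_pow, div_eq_iff (pow_ne_zero _ ha)]; linear_combination h⟩

theorem stmt_4_general (k : ℕ) (hk : 2 ≤ k) (F : Type*) [Field F]
    (A B : Matrix (Fin 2) (Fin 2) F)
    (hA : A.BlockTriangular id) (hB : B.BlockTriangular id)
    (h : A ^ k + B ^ k = !![(0 : F), 1; 0, 0]) :
    ∃ x : F, x ^ k = -1 := by
  have hdiag (i : Fin 2) : A i i ^ k + B i i ^ k = 0 := by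
    have hi := congrFun₂ h i i
    rw [Matrix.add_apply, hA.pow_apply_self, hB.pow_apply_self] at hi
    fin_cases i <;> simpa using hi
  by_cases hAdiag : ∃ i, A i i ≠ 0
  · obtain ⟨i, hi⟩ := hAdiag
    exact exists_pow_eq_neg_one_of_pow_add_pow_eq_zero hi (hdiag i)
  push Not at hAdiag
  have hk0 : k ≠ 0 := by omega
  have hBdiag (i : Fin 2) : B i i = 0 := by simpa [hAdiag i, hk0] using hdiag i
  have hAk : A ^ k = 0 := pow_eq_zero_of_le hk (hA.pow_card_eq_zero_of_diag_eq_zero hAdiag)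
  have hBk : B ^ k = 0 := pow_eq_zero_of_le hk (hB.pow_card_eq_zero_of_diag_eq_zero hBdiag)
  simpa [hAk, hBk] using congrFun₂ h 0 1

/-- If the matrix `[[0,1],[0,0]]` is a sum of two `k`-th powers of upper triangular
matrices, then `-1` is a `k`-th power in `F_q`. -/
theorem stmt_4 (k : ℕ) (hk : 2 ≤ k) (F : Type*) [Field F] [Fintype F]
    (A B : Matrix (Fin 2) (Fin 2) F)
    (hA : A.BlockTriangular id) (hB : B.BlockTriangular id)
    (h : A ^ k + B ^ k = !![(0 : F), 1; 0, 0]) :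
    ∃ x : F, x ^ k = -1 :=
  stmt_4_general k hk F A B hA hB h
end

section
/- Let k ≥ 2 and n ≥ 2, and suppose −1 is not a k-th power in F_q (i.e., there is no x ∈ F_q with x^k = −1). Let J ∈ T_n(F_q) be the nilpotent Jordan block, i.e., the matrix with (i, i+1) entries equal to 1 for 1 ≤ i ≤ n−1 and all other entries 0. Then there do not exist A, B ∈ T_n(F_q) with J = A^k + B^k. -/
section aux

variable {n : ℕ} {F : Type*} [Field F]

lemma aux_pow_triangular (A : Matrix (Fin n) (Fin n) F)
    (hA : A.BlockTriangular id) (k : ℕ) : (A ^ k).BlockTriangular id := by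
  induction k with
  | zero => simpa [pow_zero] using Matrix.blockTriangular_one
  | succ m ih => rw [pow_succ]; exact ih.mul hA

lemma aux_diag_pow (A : Matrix (Fin n) (Fin n) F)
    (hA : A.BlockTriangular id) (k : ℕ) (i : Fin n) :
    (A ^ k) i i = (A i i) ^ k := by
  induction k with
  | zero => simp [Matrix.one_apply]
  | succ m ih =>
    rw [pow_succ, pow_succ, Matrix.mul_apply]
    rw [Finset.sum_eq_single i]
    · rw [ih]
    · intro l _ hl
      rcases lt_or_gt_of_ne hl with h | h
      · rw [(aux_pow_triangular A hA m) (show id l < id i from h), zero_mul]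
      · rw [hA (show id i < id l from h), mul_zero]
    · simp

lemma aux_strict_pow (A : Matrix (Fin n) (Fin n) F)
    (hA : ∀ i j : Fin n, (j : ℕ) ≤ (i : ℕ) → A i j = 0) :
    ∀ m, ∀ i j : Fin n, (j : ℕ) < (i : ℕ) + (m + 1) → (A ^ (m + 1)) i j = 0 := by
  intro m
  induction m with
  | zero => intro i j h; rw [pow_one]; exact hA i j (by omega)
  | succ m ih =>
    intro i j h
    rw [pow_succ', Matrix.mul_apply]
    apply Finset.sum_eq_zero
    intro l _
    by_cases hl : (l : ℕ) ≤ (i : ℕ)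
    · rw [hA i l hl, zero_mul]
    · rw [ih l j (by omega), mul_zero]

end aux

/-- If `-1` is not a `k`-th power in `F_q`, then the nilpotent Jordan block is not
a sum of two `k`-th powers of upper triangular matrices. -/
theorem stmt_5 (k n : ℕ) (hk : 2 ≤ k) (hn : 2 ≤ n)
    (F : Type*) [Field F] [Fintype F]
    (hneg : ¬∃ x : F, x ^ k = -1)
    (J : Matrix (Fin n) (Fin n) F)
    (hJ : ∀ i j : Fin n, J i j = if (i : ℕ) + 1 = (j : ℕ) then 1 else 0) :
    ¬∃ A B : Matrix (Fin n) (Fin n) F,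
        A.BlockTriangular id ∧ B.BlockTriangular id ∧ J = A ^ k + B ^ k := by
  rintro ⟨A, B, hA, hB, hsum⟩
  -- diagonals are zero
  have hdiag : ∀ i : Fin n, A i i = 0 ∧ B i i = 0 := by
    intro i
    have h0 : (A i i) ^ k + (B i i) ^ k = 0 := by
      have := congrFun (congrFun hsum i) i
      rw [hJ i i, if_neg (by omega), Matrix.add_apply,
        aux_diag_pow A hA k i, aux_diag_pow B hB k i] at this
      exact this.symm
    by_cases hb : B i i = 0
    · refine ⟨?_, hb⟩
      have h1 : (A i i) ^ k = 0 := by rw [hb] at h0; simpa [zero_pow (show k ≠ 0 by omega)] using h0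
      exact pow_eq_zero_iff (show k ≠ 0 by omega) |>.mp h1
    · exfalso
      apply hneg
      refine ⟨A i i / B i i, ?_⟩
      rw [div_pow, div_eq_iff (pow_ne_zero k hb)]
      linear_combination h0
  -- strict triangularity
  have hsA : ∀ i j : Fin n, (j : ℕ) ≤ (i : ℕ) → A i j = 0 := by
    intro i j hij
    rcases eq_or_lt_of_le hij with h | h
    · have hj : j = i := Fin.ext h
      rw [hj]
      exact (hdiag i).1
    · exact hA (show id j < id i from h)
  have hsB : ∀ i j : Fin n, (j : ℕ) ≤ (i : ℕ) → B i j = 0 := by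
    intro i j hij
    rcases eq_or_lt_of_le hij with h | h
    · have hj : j = i := Fin.ext h
      rw [hj]
      exact (hdiag i).2
    · exact hB (show id j < id i from h)
  obtain ⟨m, rfl⟩ : ∃ m, k = m + 1 + 1 := ⟨k - 2, by omega⟩
  set i0 : Fin n := ⟨0, by omega⟩
  set j1 : Fin n := ⟨1, by omega⟩
  have h01 := congrFun (congrFun hsum i0) j1
  rw [hJ i0 j1, if_pos rfl, Matrix.add_apply,
    aux_strict_pow A hsA (m + 1) i0 j1 (by simp [i0, j1]),
    aux_strict_pow B hsB (m + 1) i0 j1 (by simp [i0, j1])] at h01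
  simp at h01
end

section
/- Let A ∈ T_n(F_q) be such that a_{rs}·a_{st} = 0 for all indices r < s < t. Then for every positive integer m ≥ 1: (i) (A^m)_{rs}·a_{st} = 0 for all r < s < t, and (ii) for any i < j, if a_{ij} = 0 then (A^m)_{ij} = 0. -/
/-- If `A` is upper triangular with `a_{rs}a_{st} = 0` for all `r < s < t`, then for
every `m ≥ 1`: `(A^m)_{rs}·a_{st} = 0` for all `r < s < t`, and if `a_{ij} = 0` with
`i < j` then `(A^m)_{ij} = 0`. -/
theorem stmt_6 (n : ℕ) (F : Type*) [Field F] [Fintype F]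
    (A : Matrix (Fin n) (Fin n) F) (hA : A.BlockTriangular id)
    (h : ∀ r s t : Fin n, r < s → s < t → A r s * A s t = 0) :
    ∀ m : ℕ, 1 ≤ m →
      (∀ r s t : Fin n, r < s → s < t → (A ^ m) r s * A s t = 0) ∧
      (∀ i j : Fin n, i < j → A i j = 0 → (A ^ m) i j = 0) := by
  intro m hm
  induction m, hm using Nat.le_induction with
  | base =>
    refine ⟨fun r s t hrs hst => ?_, fun i j hij h0 => ?_⟩
    · rw [pow_one]; exact h r s t hrs hst
    · rw [pow_one]; exact h0
  | succ m hm ih =>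
    obtain ⟨ih1, ih2⟩ := ih
    have hpow : ∀ k : ℕ, (A ^ k).BlockTriangular id := by
      intro k
      induction k with
      | zero => simpa using Matrix.blockTriangular_one
      | succ k ihk => rw [pow_succ]; exact ihk.mul hA
    have hpow := hpow m
    constructor
    · intro r s t hrs hst
      rw [pow_succ', Matrix.mul_apply, Finset.sum_mul]
      apply Finset.sum_eq_zero
      intro k _
      rcases lt_trichotomy k s with hk | hk | hk
      · rw [mul_assoc, ih1 k s t hk hst, mul_zero]
      · subst hk
        rw [show A r k * (A ^ m) k k * A k t = (A ^ m) k k * (A r k * A k t) by ring,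
          h r k t hrs hst, mul_zero]
      · rw [hpow hk, mul_zero, zero_mul]
    · intro i j hij h0
      rw [pow_succ, Matrix.mul_apply]
      apply Finset.sum_eq_zero
      intro k _
      rcases lt_trichotomy k i with hk | hk | hk
      · rw [hpow hk, zero_mul]
      · subst hk; rw [h0, mul_zero]
      · rcases lt_trichotomy k j with hkj | hkj | hkj
        · exact ih1 i k j hk hkj
        · subst hkj; rw [ih2 i k hk h0, zero_mul]
        · rw [hA hkj, mul_zero]
end

section
/- Let k ≥ 2 and suppose the characteristic of F_q is not 2. Let λ ∈ F_q be nonzero. Then for all q > k¹⁶, there exist two pairs (x₁, y₁), (x₂, y₂) ∈ F_q × F_q with x₁^k + y₁^k = λ, x₂^k + y₂^k = λ, x₁^k ≠ x₂^k and y₁^k ≠ y₂^k. -/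
/-!
Let `S ⊆ Fˣ` be the subgroup of nonzero `k`-th powers and `E` the group of complex multiplicative
characters with `χ ^ k = 1`. By duality, `∑ χ ∈ E, χ a` is `#E` times the indicator of `S`, so
`#E ^ 2 * #{a | a ∈ S ∧ λ - a ∈ S}` equals `∑ χ, ψ ∈ E, χ(λ) ψ(λ) J(χ, ψ)`. The term
`χ = ψ = 1` is `J(1, 1) = q - 2`, every other Jacobi sum has absolute value at most `√q`, and
`#E ≤ k` because the character group is cyclic. For `q > k ^ 16` this leaves at least two such
`a`, and `a₁ ≠ a₂` yield solutions `x_i ^ k = a_i`, `y_i ^ k = λ - a_i`.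
-/

open Finset

namespace MulChar

variable {M R : Type*} [CommMonoid M] [Finite M] [CommRing R]

section Duality

variable [HasEnoughRootsOfUnity R (Monoid.exponent Mˣ)]

lemma exists_pow_eq_one_apply_ne_one {k : ℕ} {u : Mˣ}
    (hu : u ∉ (powMonoidHom k : Mˣ →* Mˣ).range) :
    ∃ χ : MulChar M R, χ ^ k = 1 ∧ χ u ≠ 1 := by
  set X := (subgroupOrderIsoSubgroupMulChar M R (powMonoidHom k).range).ofDual
  have hX : (subgroupOrderIsoSubgroupMulChar M R).symm (OrderDual.toDual X) =
      (powMonoidHom k).range := OrderIso.symm_apply_apply _ _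
  rw [← hX, mem_subgroupOrderIsoSubgroupMulChar_symm_iff] at hu
  simp only [not_forall] at hu
  obtain ⟨χ, hχX, hχu⟩ := hu
  refine ⟨χ, ext fun v ↦ ?_, hχu⟩
  rw [pow_apply_coe, one_apply_coe, ← map_pow, ← Units.val_pow_eq_pow_val]
  exact (mem_subgroupOrderIsoSubgroupMulChar_iff.mp hχX) _ ⟨v, rfl⟩

lemma card_pow_eq_one_le [IsCyclic Mˣ] [Fintype (MulChar M R)] [DecidableEq (MulChar M R)]
    {k : ℕ} (hk : k ≠ 0) :
    #{χ : MulChar M R | χ ^ k = 1} ≤ k :=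
  have : IsCyclic (MulChar M R) :=
    isCyclic_of_surjective _ (mulEquiv_units M R).some.symm.surjective
  IsCyclic.card_pow_eq_one_le (Nat.pos_of_ne_zero hk)

variable [IsDomain R] [Fintype (MulChar M R)] [DecidableEq (MulChar M R)]

lemma sum_pow_eq_one_apply (k : ℕ) (a : M) :
    ∑ χ : MulChar M R with χ ^ k = 1, χ a =
      (Set.range fun v : Mˣ ↦ (v : M) ^ k).indicator
        (fun _ ↦ (#{χ : MulChar M R | χ ^ k = 1} : R)) a := by
  by_cases ha : IsUnit a
  swap
  · rw [Set.indicator_of_notMem (by rintro ⟨v, rfl⟩; exact ha ((Units.isUnit v).pow k))]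
    exact sum_eq_zero fun χ _ ↦ χ.map_nonunit ha
  obtain ⟨u, rfl⟩ := ha
  by_cases hu : u ∈ (powMonoidHom k : Mˣ →* Mˣ).range
  · obtain ⟨v, rfl⟩ := hu
    have h_one : ∀ χ ∈ ({χ | χ ^ k = 1} : Finset (MulChar M R)), χ ↑(v ^ k) = 1 := by
      intro χ hχ
      rw [Units.val_pow_eq_pow_val, map_pow, ← pow_apply_coe, (mem_filter.mp hχ).2,
        one_apply_coe]
    rw [powMonoidHom_apply, sum_congr rfl h_one, sum_const, nsmul_one, Units.val_pow_eq_pow_val,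
      Set.indicator_of_mem (Set.mem_range_self (f := fun v : Mˣ ↦ (v : M) ^ k) v)]
  · rw [Set.indicator_of_notMem (by
      rintro ⟨v, hv⟩; exact hu ⟨v, Units.val_injective (by simpa using hv)⟩)]
    obtain ⟨χ₀, hχ₀k, hχ₀u⟩ := exists_pow_eq_one_apply_ne_one (R := R) hu
    have h_shift : χ₀ u * ∑ χ : MulChar M R with χ ^ k = 1, χ u =
        ∑ χ : MulChar M R with χ ^ k = 1, χ u := by
      rw [mul_sum]
      refine sum_equiv (Equiv.mulLeft χ₀) (fun χ ↦ ?_) fun χ _ ↦ ?_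
      · simp [mul_pow, hχ₀k]
      · simp
    have : (χ₀ u - 1) * ∑ χ : MulChar M R with χ ^ k = 1, χ u = 0 := by
      rw [sub_mul, h_shift, one_mul, sub_self]
    exact (mul_eq_zero.mp this).resolve_left (sub_ne_zero.mpr hχ₀u)

end Duality

lemma norm_apply_le_one (χ : MulChar M ℂ) (a : M) : ‖χ a‖ ≤ 1 := by
  have := Fintype.ofFinite Mˣ
  by_cases ha : IsUnit a
  · obtain ⟨u, rfl⟩ := ha
    refine ((pow_eq_one_iff_of_nonneg (norm_nonneg _) (Fintype.card_pos (α := Mˣ)).ne').mp ?_).le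
    rw [← norm_pow, ← map_pow, ← Units.val_pow_eq_pow_val, pow_card_eq_one, Units.val_one,
      map_one, norm_one]
  · rw [χ.map_nonunit ha, norm_zero]
    exact zero_le_one

end MulChar

section JacobiSum

variable {F : Type*} [Field F] [Fintype F]

lemma sum_apply_mul_apply_sub_eq_jacobiSum {R : Type*} [CommRing R] (χ ψ : MulChar F R)
    {c : F} (hc : c ≠ 0) :
    ∑ a : F, χ a * ψ (c - a) = χ c * ψ c * jacobiSum χ ψ := by
  rw [jacobiSum, mul_sum]
  refine (Fintype.sum_equiv (Equiv.mulLeft₀ c hc) _ _ fun x ↦ ?_).symm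
  rw [Equiv.mulLeft₀_apply, ← mul_one_sub, map_mul, map_mul]
  ring

lemma norm_jacobiSum_le_sqrt_card {χ ψ : MulChar F ℂ} (h : χ ≠ 1 ∨ ψ ≠ 1) :
    ‖jacobiSum χ ψ‖ ≤ √(Fintype.card F) := by
  have one_le : (1 : ℝ) ≤ √(Fintype.card F) :=
    Real.one_le_sqrt.mpr (by exact_mod_cast Fintype.card_pos)
  by_cases hχ : χ = 1
  · rw [hχ, jacobiSum_one_nontrivial (h.resolve_left (not_not.mpr hχ)), norm_neg, norm_one]
    exact one_le
  by_cases hψ : ψ = 1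
  · rw [hψ, jacobiSum_comm, jacobiSum_one_nontrivial hχ, norm_neg, norm_one]
    exact one_le
  by_cases hχψ : χ * ψ = 1
  · rw [eq_inv_of_mul_eq_one_right hχψ, jacobiSum_nontrivial_inv hχ, norm_neg]
    exact (χ.norm_apply_le_one _).trans one_le
  have hchar : ringChar ℂ ≠ ringChar F := by
    rw [ringChar.eq_zero]
    exact (CharP.char_ne_zero_of_finite F (ringChar F)).symm
  have h_mul := jacobiSum_mul_jacobiSum_inv hchar hχ hψ hχψ
  have h_star : jacobiSum (star χ) (star ψ) = star (jacobiSum χ ψ) := by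
    simp [jacobiSum, star_sum]
  rw [← MulChar.star_eq_inv, ← MulChar.star_eq_inv, h_star, Complex.star_def,
    Complex.mul_conj'] at h_mul
  rw [Real.le_sqrt (norm_nonneg _) (Nat.cast_nonneg _)]
  exact (by exact_mod_cast h_mul : ‖jacobiSum χ ψ‖ ^ 2 = Fintype.card F).le

variable (k : ℕ) {c : F}

open Classical in
lemma card_sq_mul_card_eq_sum_jacobiSum {R : Type*} [CommRing R] [IsDomain R]
    [HasEnoughRootsOfUnity R (Monoid.exponent Fˣ)] [Fintype (MulChar F R)]
    [DecidableEq (MulChar F R)] (hc : c ≠ 0) :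
    ((#{χ : MulChar F R | χ ^ k = 1} ^ 2 *
        #{a : F | a ∈ Set.range (fun v : Fˣ ↦ (v : F) ^ k) ∧
          c - a ∈ Set.range (fun v : Fˣ ↦ (v : F) ^ k)} : ℕ) : R) =
      ∑ χ : MulChar F R with χ ^ k = 1, ∑ ψ : MulChar F R with ψ ^ k = 1,
        χ c * ψ c * jacobiSum χ ψ := by
  symm
  calc _ = ∑ a : F, (∑ χ : MulChar F R with χ ^ k = 1, χ a) *
        ∑ ψ : MulChar F R with ψ ^ k = 1, ψ (c - a) := by
        simp_rw [sum_mul_sum, ← sum_apply_mul_apply_sub_eq_jacobiSum (R := R) _ _ hc]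
        exact (sum_comm.trans (sum_congr rfl fun _ _ ↦ sum_comm)).symm
    _ = _ := by
        simp only [MulChar.sum_pow_eq_one_apply, Set.indicator_apply, ite_zero_mul_ite_zero]
        rw [← sum_filter, sum_const, nsmul_eq_mul]
        push_cast
        ring

open Classical in
lemma card_sub_two_sub_le_card_sq_mul_card [Fintype (MulChar F ℂ)]
    [DecidableEq (MulChar F ℂ)] (hc : c ≠ 0) :
    (Fintype.card F : ℝ) - 2 - #{χ : MulChar F ℂ | χ ^ k = 1} ^ 2 * √(Fintype.card F) ≤
      #{χ : MulChar F ℂ | χ ^ k = 1} ^ 2 *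
        #{a : F | a ∈ Set.range (fun v : Fˣ ↦ (v : F) ^ k) ∧
          c - a ∈ Set.range (fun v : Fˣ ↦ (v : F) ^ k)} := by
  have h_eq := card_sq_mul_card_eq_sum_jacobiSum (R := ℂ) k hc
  set E : Finset (MulChar F ℂ) := {χ | χ ^ k = 1}
  set N := #E ^ 2 * #{a : F | a ∈ Set.range (fun v : Fˣ ↦ (v : F) ^ k) ∧
    c - a ∈ Set.range (fun v : Fˣ ↦ (v : F) ^ k)}
  have h_one : ((1 : MulChar F ℂ), (1 : MulChar F ℂ)) ∈ E ×ˢ E := by simp [E]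
  rw [← sum_product' (f := fun χ ψ ↦ χ c * ψ c * jacobiSum χ ψ),
    ← add_sum_erase _ _ h_one, MulChar.one_apply hc.isUnit, jacobiSum_one_one, one_mul,
    one_mul] at h_eq
  have h_rest : ‖∑ p ∈ (E ×ˢ E).erase (1, 1), p.1 c * p.2 c * jacobiSum p.1 p.2‖ ≤
      #E ^ 2 * √(Fintype.card F) := by
    refine (norm_sum_le _ _).trans
      ((sum_le_card_nsmul _ _ (√(Fintype.card F)) fun p hp ↦ ?_).trans ?_)
    · have hp1 : p.1 ≠ 1 ∨ p.2 ≠ 1 := by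
        by_contra! h
        exact (ne_of_mem_erase hp) (Prod.ext h.1 h.2)
      rw [norm_mul, norm_mul]
      calc ‖p.1 c‖ * ‖p.2 c‖ * ‖jacobiSum p.1 p.2‖ ≤ 1 * 1 * √(Fintype.card F) := by
            gcongr
            exacts [p.1.norm_apply_le_one c, p.2.norm_apply_le_one c,
              norm_jacobiSum_le_sqrt_card hp1]
        _ = √(Fintype.card F) := by ring
    · rw [nsmul_eq_mul, sq, ← Nat.cast_mul, ← card_product]
      gcongr
      exact erase_subset _ _
  have h_dist : |(N : ℝ) - (Fintype.card F - 2)| ≤ #E ^ 2 * √(Fintype.card F) := by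
    rw [← Real.norm_eq_abs, ← Complex.norm_real]
    push_cast
    rw [h_eq, add_sub_cancel_left]
    exact h_rest
  have h_low := (abs_le.mp h_dist).1
  push_cast [N] at h_low
  linarith

end JacobiSum

lemma one_lt_of_sub_two_sub_le_sq_mul {k c t q : ℝ} (hk : 2 ≤ k) (hq : k ^ 16 < q)
    (hc : 0 ≤ c) (hck : c ≤ k) (h : q - 2 - c ^ 2 * √q ≤ c ^ 2 * t) : 1 < t := by
  by_contra! ht
  set s := √q
  have hq_sq : s ^ 2 = q := Real.sq_sqrt ((by positivity : (0 : ℝ) ≤ k ^ 16).trans hq.le)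
  have hs : k ^ 8 < s := (Real.lt_sqrt (by positivity)).mpr (by rwa [← pow_mul])
  have h64 : 64 * k ^ 2 ≤ k ^ 8 := by
    have : (2 : ℝ) ^ 6 ≤ k ^ 6 := pow_le_pow_left₀ (by norm_num) hk 6
    nlinarith [sq_nonneg k]
  have hc2 : c ^ 2 ≤ k ^ 2 := pow_le_pow_left₀ hc hck 2
  have hct : c ^ 2 * t ≤ c ^ 2 := mul_le_of_le_one_right (by positivity) ht
  have hcs : c ^ 2 * s ≤ k ^ 2 * s := mul_le_mul_of_nonneg_right hc2 (Real.sqrt_nonneg q)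
  have hk2 : 4 ≤ k ^ 2 := by nlinarith
  nlinarith

theorem stmt_8_general (k : ℕ) (hk : 2 ≤ k) (F : Type*) [Field F] [Fintype F]
    (lam : F) (hlam : lam ≠ 0)
    (hq : k ^ 16 < Fintype.card F) :
    ∃ x₁ y₁ x₂ y₂ : F,
      x₁ ^ k + y₁ ^ k = lam ∧ x₂ ^ k + y₂ ^ k = lam ∧
      x₁ ^ k ≠ x₂ ^ k ∧ y₁ ^ k ≠ y₂ ^ k := by
  classical
  let _ : Fintype (MulChar F ℂ) := Fintype.ofFinite _
  suffices hT : 1 < #{a : F | a ∈ Set.range (fun v : Fˣ ↦ (v : F) ^ k) ∧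
      lam - a ∈ Set.range (fun v : Fˣ ↦ (v : F) ^ k)} by
    obtain ⟨a₁, h₁, a₂, h₂, hne⟩ := one_lt_card.mp hT
    simp only [mem_filter, mem_univ, true_and] at h₁ h₂
    obtain ⟨⟨x₁, rfl⟩, y₁, hy₁ : (y₁ : F) ^ k = lam - x₁ ^ k⟩ := h₁
    obtain ⟨⟨x₂, rfl⟩, y₂, hy₂ : (y₂ : F) ^ k = lam - x₂ ^ k⟩ := h₂
    refine ⟨x₁, y₁, x₂, y₂, by rw [hy₁]; ring, by rw [hy₂]; ring, hne, ?_⟩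
    rw [hy₁, hy₂]
    exact fun h ↦ hne (sub_right_injective h)
  have hE : #{χ : MulChar F ℂ | χ ^ k = 1} ≤ k := MulChar.card_pow_eq_one_le (by omega)
  exact_mod_cast one_lt_of_sub_two_sub_le_sq_mul (k := k) (by exact_mod_cast hk)
    (by exact_mod_cast hq) (Nat.cast_nonneg _) (by exact_mod_cast hE)
    (card_sub_two_sub_le_card_sq_mul_card k hlam)

/-- For odd characteristic, `λ ≠ 0` and `q > k¹⁶`, the equation `X^k + Y^k = λ` has
two solutions with distinct `k`-th powers in each coordinate. -/
theorem stmt_8 (k : ℕ) (hk : 2 ≤ k) (F : Type*) [Field F] [Fintype F]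
    (hchar : ringChar F ≠ 2) (lam : F) (hlam : lam ≠ 0)
    (hq : k ^ 16 < Fintype.card F) :
    ∃ x₁ y₁ x₂ y₂ : F,
      x₁ ^ k + y₁ ^ k = lam ∧ x₂ ^ k + y₂ ^ k = lam ∧
      x₁ ^ k ≠ x₂ ^ k ∧ y₁ ^ k ≠ y₂ ^ k :=
  stmt_8_general k hk F lam hlam hq
end

section
/- Let k ≥ 1 and let C ∈ T_n(F_q) be a matrix whose diagonal entries c₁₁, …, c_nn are pairwise distinct and each of which is a k-th power in F_q. Then there exists A ∈ T_n(F_q) with C = A^k. -/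
/-!
Interpolate a `k`-th root of each diagonal entry: with `g` the Lagrange polynomial taking
`c_ii` to a chosen `x_i`, the polynomial `g ^ k - X` vanishes at every `c_ii`. Since the
`c_ii` are distinct, the characteristic polynomial `∏ (X - c_ii)` of `C` divides it, so by
Cayley–Hamilton `g(C) ^ k = C`, and `g(C)` is upper triangular as a polynomial in `C`.
-/

open Polynomial

namespace Matrix

variable {n R : Type*} [Fintype n] [DecidableEq n]

theorem BlockTriangular.aeval [CommRing R] {α : Type*} [LinearOrder α] {b : n → α}
    {M : Matrix n n R} (hM : M.BlockTriangular b) (p : R[X]) :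
    (Polynomial.aeval M p).BlockTriangular b := by
  have h := (Polynomial.aeval (⟨M, hM⟩ : blockTriangularSubalgebra R R b) p).2
  rwa [aeval_subalgebra_coe] at h

theorem aeval_eq_aeval_of_charpoly_dvd [CommRing R] (M : Matrix n n R) {p q : R[X]}
    (h : M.charpoly ∣ p - q) : aeval M p = aeval M q := by
  obtain ⟨r, hr⟩ := h
  rw [← sub_eq_zero, ← map_sub, hr, map_mul, aeval_self_charpoly, zero_mul]

theorem IsUpperTriangular.aeval_eq_aeval_of_eval_diag_eq [Field R] [LinearOrder n]
    {M : Matrix n n R} (hM : M.IsUpperTriangular) (hdiag : Function.Injective fun i => M i i)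
    {p q : R[X]} (hpq : ∀ i, p.eval (M i i) = q.eval (M i i)) : aeval M p = aeval M q := by
  refine M.aeval_eq_aeval_of_charpoly_dvd ?_
  rw [charpoly_of_isUpperTriangular M hM]
  refine Finset.prod_dvd_of_coprime ((pairwise_coprime_X_sub_C hdiag).set_pairwise _) ?_
  intro i _
  rw [dvd_iff_isRoot, IsRoot, eval_sub, hpq, sub_self]

end Matrix

theorem stmt_16_general (k n : ℕ)
    (F : Type*) [Field F]
    (C : Matrix (Fin n) (Fin n) F) (hC : C.BlockTriangular id)
    (hdistinct : ∀ i j : Fin n, i ≠ j → C i i ≠ C j j)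
    (hpow : ∀ i : Fin n, ∃ x : F, x ^ k = C i i) :
    ∃ A : Matrix (Fin n) (Fin n) F, A.BlockTriangular id ∧ C = A ^ k := by
  choose x hx using hpow
  have hdiag : Function.Injective fun i => C i i := fun i j h =>
    by_contra fun hij => hdistinct i j hij h
  set g := Lagrange.interpolate Finset.univ (fun i => C i i) x
  have hg (i : Fin n) : (g ^ k).eval (C i i) = X.eval (C i i) := by
    rw [eval_pow, Lagrange.eval_interpolate_at_node x hdiag.injOn (Finset.mem_univ i), hx, eval_X]
  refine ⟨aeval C g, hC.aeval g, ?_⟩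
  rw [← map_pow, Matrix.IsUpperTriangular.aeval_eq_aeval_of_eval_diag_eq hC hdiag hg, aeval_X]

/-- An upper triangular matrix whose diagonal entries are pairwise distinct `k`-th
powers is itself a `k`-th power of an upper triangular matrix. -/
theorem stmt_16 (k n : ℕ) (hk : 1 ≤ k)
    (F : Type*) [Field F] [Fintype F]
    (C : Matrix (Fin n) (Fin n) F) (hC : C.BlockTriangular id)
    (hdistinct : ∀ i j : Fin n, i ≠ j → C i i ≠ C j j)
    (hpow : ∀ i : Fin n, ∃ x : F, x ^ k = C i i) :
    ∃ A : Matrix (Fin n) (Fin n) F, A.BlockTriangular id ∧ C = A ^ k :=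
  stmt_16_general k n F C hC hdistinct hpow
end

section
/- Let k ≥ 1 and let C ∈ T_n(F_q) be a matrix such that: (i) every diagonal entry c_ii is a k-th power in F_q; (ii) c_{rs}·c_{st} = 0 for all indices r < s < t; and (iii) for all i < j, if c_{ij} ≠ 0 then c_{ii} ≠ c_{jj}. Then there exists A ∈ T_n(F_q) with C = A^k. -/
open Matrix Finset

/-- If `C` is upper triangular with `k`-th power diagonal entries, satisfies
`c_{rs}c_{st} = 0` for all `r < s < t`, and `c_{ij} ≠ 0 → c_{ii} ≠ c_{jj}` for
`i < j`, then `C` is a `k`-th power of an upper triangular matrix. -/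
theorem stmt_17 (k n : ℕ) (hk : 1 ≤ k)
    (F : Type*) [Field F] [Fintype F]
    (C : Matrix (Fin n) (Fin n) F) (hC : C.BlockTriangular id)
    (hpow : ∀ i : Fin n, ∃ x : F, x ^ k = C i i)
    (hzero : ∀ r s t : Fin n, r < s → s < t → C r s * C s t = 0)
    (hne : ∀ i j : Fin n, i < j → C i j ≠ 0 → C i i ≠ C j j) :
    ∃ A : Matrix (Fin n) (Fin n) F, A.BlockTriangular id ∧ C = A ^ k := by
  classical
  choose e he using hpow
  set S : Fin n → Fin n → F := fun i j => ∑ a ∈ Finset.range k, e i ^ a * e j ^ (k - 1 - a)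
    with hSdef
  have hSne : ∀ i j : Fin n, i < j → C i j ≠ 0 → S i j ≠ 0 := by
    intro i j hij hC0 h0
    have hee : e i ≠ e j := by
      intro h
      exact hne i j hij hC0 (by rw [← he i, ← he j, h])
    have hgs := geom_sum₂_mul (e i) (e j) k
    have h0' : (∑ a ∈ Finset.range k, e i ^ a * e j ^ (k - 1 - a)) = 0 := h0
    rw [h0', zero_mul] at hgs
    have : e i ^ k = e j ^ k := sub_eq_zero.mp hgs.symm
    rw [he i, he j] at this
    exact hne i j hij hC0 this
  set M : Matrix (Fin n) (Fin n) F :=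
    Matrix.of (fun i j => if i < j then C i j / S i j else 0) with hMdef
  set D : Matrix (Fin n) (Fin n) F := Matrix.diagonal e with hDdef
  have hMapp : ∀ i j : Fin n, M i j = if i < j then C i j / S i j else 0 := fun i j => rfl
  have hMDM : ∀ d : Fin n → F, M * Matrix.diagonal d * M = 0 := by
    intro d
    ext r t
    rw [Matrix.mul_apply]
    rw [Matrix.zero_apply]
    refine Finset.sum_eq_zero fun s _ => ?_
    rw [Matrix.mul_diagonal]
    by_cases hrs : r < s
    · by_cases hst : s < t
      · rw [hMapp, hMapp, if_pos hrs, if_pos hst]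
        rw [mul_comm (C r s / S r s) (d s), mul_assoc, div_mul_div_comm,
          hzero r s t hrs hst, zero_div, mul_zero]
      · rw [hMapp s t, if_neg hst, mul_zero]
    · rw [hMapp r s, if_neg hrs, zero_mul, zero_mul]
  have hpowA : ∀ m : ℕ,
      (D + M) ^ m = D ^ m + ∑ p ∈ Finset.range m, D ^ p * M * D ^ (m - 1 - p) := by
    intro m
    induction m with
    | zero => simp
    | succ m ih =>
      rw [pow_succ, ih, add_mul, mul_add, mul_add, Finset.sum_mul, Finset.sum_mul]
      have h1 : ∀ p ∈ Finset.range m,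
          D ^ p * M * D ^ (m - 1 - p) * D = D ^ p * M * D ^ (m - p) := by
        intro p hp
        rw [mul_assoc, ← pow_succ]
        have : m - 1 - p + 1 = m - p := by
          have := Finset.mem_range.mp hp; omega
        rw [this]
      have h2 : ∀ p ∈ Finset.range m,
          D ^ p * M * D ^ (m - 1 - p) * M = 0 := by
        intro p _
        have : D ^ (m - 1 - p) = Matrix.diagonal (fun i => e i ^ (m - 1 - p)) := by
          rw [hDdef, Matrix.diagonal_pow]; rfl
        rw [mul_assoc, mul_assoc, this, ← mul_assoc M, hMDM, mul_zero]
      rw [Finset.sum_congr rfl h1, Finset.sum_congr rfl h2, Finset.sum_const_zero, add_zero]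
      rw [Finset.sum_range_succ]
      have hlast : D ^ m * M * D ^ (m + 1 - 1 - m) = D ^ m * M := by
        simp
      have hrest : ∀ p ∈ Finset.range m,
          D ^ p * M * D ^ (m + 1 - 1 - p) = D ^ p * M * D ^ (m - p) := by
        intro p _; rfl
      rw [Finset.sum_congr rfl hrest, hlast, ← pow_succ]
      abel
  refine ⟨D + M, ?_, ?_⟩
  · apply Matrix.BlockTriangular.add
    · exact Matrix.blockTriangular_diagonal e
    · intro i j hji
      rw [hMapp, if_neg (by exact fun h => absurd h (not_lt.mpr (le_of_lt hji)))]
  · ext i j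
    rw [hpowA k]
    have hDk : D ^ k = Matrix.diagonal (fun i => e i ^ k) := by
      rw [hDdef, Matrix.diagonal_pow]; rfl
    rw [Matrix.add_apply, hDk]
    have hsum : (∑ p ∈ Finset.range k, D ^ p * M * D ^ (k - 1 - p)) i j
        = M i j * S i j := by
      rw [Matrix.sum_apply]
      show _ = M i j * ∑ a ∈ Finset.range k, e i ^ a * e j ^ (k - 1 - a)
      rw [Finset.mul_sum]
      refine Finset.sum_congr rfl fun p _ => ?_
      have hp1 : D ^ p = Matrix.diagonal (fun i => e i ^ p) := by
        rw [hDdef, Matrix.diagonal_pow]; rfl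
      have hp2 : D ^ (k - 1 - p) = Matrix.diagonal (fun i => e i ^ (k - 1 - p)) := by
        rw [hDdef, Matrix.diagonal_pow]; rfl
      rw [hp1, hp2, Matrix.mul_diagonal, Matrix.diagonal_mul]
      ring
    rw [hsum]
    rcases lt_trichotomy i j with hij | hij | hij
    · rw [Matrix.diagonal_apply_ne _ (Fin.ne_of_lt hij), zero_add,
        hMapp, if_pos hij]
      by_cases hc : C i j = 0
      · rw [hc, zero_div, zero_mul]
      · rw [div_mul_cancel₀ _ (hSne i j hij hc)]
    · subst hij
      rw [Matrix.diagonal_apply_eq, hMapp, if_neg (lt_irrefl i), zero_mul, add_zero, he]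
    · rw [Matrix.diagonal_apply_ne _ (Fin.ne_of_gt hij), zero_add,
        hMapp, if_neg (not_lt.mpr (le_of_lt hij)), zero_mul]
      exact hC hij
end

section
/- Let k ≥ 2 and suppose that for every α ∈ F_q there exist two pairs (x₁, y₁), (x₂, y₂) ∈ F_q × F_q with x₁^k + y₁^k = α = x₂^k + y₂^k, x₁^k ≠ x₂^k and y₁^k ≠ y₂^k. Let C ∈ T_n(F_q) be a matrix all of whose diagonal entries are equal, and such that all nonzero off-diagonal entries of C lie in a single row (or all lie in a single column). Then there exist X, Y ∈ T_n(F_q) with C = X^k + Y^k. -/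
/-!
Pick `d, e` with `C i i = d i ^ k + e i ^ k` and `d j ^ k ≠ d r ^ k` for `j ≠ r`, where `r` is the
row carrying the off-diagonal entries. If `X` is `diagonal d` plus entries `a j` in row `r`, then
`X ^ k` is `diagonal (d ^ k)` plus the entries `a j * s j` in row `r`, where
`s j = ∑ t < k, d j ^ t * d r ^ (k - 1 - t)` satisfies `s j * (d j - d r) = d j ^ k - d r ^ k ≠ 0`.
Taking `a j = C r j / s j` and `Y = diagonal e` gives `C = X ^ k + Y ^ k`, and `X` vanishes wherever
`C` does off the diagonal, so it stays triangular. The column case is the row case for `Cᵀ`.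
-/

open Finset

theorem geom_sum₂_ne_zero_of_pow_ne_pow {R : Type*} [CommRing R] {x y : R} {n : ℕ}
    (h : x ^ n ≠ y ^ n) : ∑ i ∈ range n, x ^ i * y ^ (n - 1 - i) ≠ 0 := fun h0 =>
  h <| sub_eq_zero.mp <| by rw [← geom_sum₂_mul, h0, zero_mul]

namespace Matrix

variable {ι R : Type*} [DecidableEq ι]

def diagonalAddRow [Zero R] (d : ι → R) (r : ι) (a : ι → R) : Matrix ι ι R :=
  of fun i j => if i = j then d i else if i = r then a j else 0

variable [Fintype ι]

theorem diagonalAddRow_pow [CommRing R] (d a : ι → R) (r : ι) (m : ℕ) :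
    diagonalAddRow d r a ^ m =
      diagonalAddRow (d ^ m) r fun j => a j * ∑ t ∈ range m, d j ^ t * d r ^ (m - 1 - t) := by
  induction m with
  | zero => ext i j; by_cases h : i = j <;> simp [diagonalAddRow, h]
  | succ m ih =>
    ext i j
    rw [pow_succ', ih, mul_apply]
    by_cases hir : i = r
    · subst hir
      by_cases hij : i = j
      · subst hij
        rw [Fintype.sum_eq_single i fun l hl => by simp [diagonalAddRow, hl]]
        simp [diagonalAddRow, pow_succ']
      · rw [Fintype.sum_eq_add i j hij fun l ⟨hli, hlj⟩ => by
          simp [diagonalAddRow, hli, hlj, Ne.symm hli]]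
        simp only [diagonalAddRow, of_apply, Pi.pow_apply, if_neg hij, if_neg (Ne.symm hij),
          if_true, Nat.add_sub_cancel]
        rw [geom_sum₂_succ_eq]
        ring
    · rw [Fintype.sum_eq_single i fun l hl => by simp [diagonalAddRow, hir, Ne.symm hl]]
      by_cases hij : i = j <;> simp [diagonalAddRow, hir, hij, pow_succ']

variable {F α : Type*} [Field F] [Preorder α] {b : ι → α} {C : Matrix ι ι F}

theorem exists_pow_add_pow_eq_of_offDiag_mem_row (hC : C.BlockTriangular b) (k : ℕ) (r : ι)
    (d e : ι → F) (hdiag : ∀ i, C i i = d i ^ k + e i ^ k) (hd : ∀ j ≠ r, d j ^ k ≠ d r ^ k)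
    (hrow : ∀ i j, i ≠ j → C i j ≠ 0 → i = r) :
    ∃ X Y : Matrix ι ι F, X.BlockTriangular b ∧ Y.BlockTriangular b ∧ C = X ^ k + Y ^ k := by
  set s : ι → F := fun j => ∑ t ∈ range k, d j ^ t * d r ^ (k - 1 - t)
  have hs : ∀ j ≠ r, s j ≠ 0 := fun j hj => geom_sum₂_ne_zero_of_pow_ne_pow (hd j hj)
  refine ⟨diagonalAddRow d r fun j => C r j / s j, diagonal e, ?_, blockTriangular_diagonal e, ?_⟩
  · intro i j hij
    have hne : i ≠ j := by rintro rfl; exact lt_irrefl _ hij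
    by_cases hir : i = r
    · subst hir
      simp [diagonalAddRow, hne, hC hij]
    · simp [diagonalAddRow, hne, hir]
  · rw [diagonalAddRow_pow, diagonal_pow]
    ext i j
    by_cases hij : i = j
    · subst hij
      simp [diagonalAddRow, hdiag]
    by_cases hir : i = r
    · subst hir
      simp [diagonalAddRow, hij, s, div_mul_cancel₀ _ (hs j (Ne.symm hij))]
    · have hC0 : C i j = 0 := by_contra fun h => hir (hrow i j hij h)
      simp [diagonalAddRow, hij, hir, hC0]

theorem exists_pow_add_pow_eq_of_offDiag_mem_col (hC : C.BlockTriangular b) (k : ℕ) (c : ι)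
    (d e : ι → F) (hdiag : ∀ i, C i i = d i ^ k + e i ^ k) (hd : ∀ j ≠ c, d j ^ k ≠ d c ^ k)
    (hcol : ∀ i j, i ≠ j → C i j ≠ 0 → j = c) :
    ∃ X Y : Matrix ι ι F, X.BlockTriangular b ∧ Y.BlockTriangular b ∧ C = X ^ k + Y ^ k := by
  obtain ⟨X, Y, hX, hY, hXY⟩ := exists_pow_add_pow_eq_of_offDiag_mem_row hC.transpose k c d e
    hdiag hd fun i j hij h => hcol j i (Ne.symm hij) h
  refine ⟨Xᵀ, Yᵀ, hX.transpose, hY.transpose, ?_⟩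
  rw [← transpose_pow, ← transpose_pow, ← transpose_add, ← hXY, transpose_transpose]

end Matrix

theorem exists_funs_pow_add_pow_eq_and_pow_ne {ι R : Type*} [DecidableEq ι] [Monoid R] [Add R]
    {k : ℕ} {a x₁ y₁ x₂ y₂ : R} (p : ι) (h₁ : x₁ ^ k + y₁ ^ k = a) (h₂ : x₂ ^ k + y₂ ^ k = a)
    (hx : x₁ ^ k ≠ x₂ ^ k) :
    ∃ d e : ι → R, (∀ i, d i ^ k + e i ^ k = a) ∧ ∀ j ≠ p, d j ^ k ≠ d p ^ k :=
  ⟨fun i => if i = p then x₁ else x₂, fun i => if i = p then y₁ else y₂,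
    fun i => by by_cases hi : i = p <;> simp [hi, h₁, h₂],
    fun j hj => by simpa [hj] using hx.symm⟩

theorem stmt_18_general (k n : ℕ)
    (F : Type*) [Field F]
    (hsol : ∀ α : F, ∃ x₁ y₁ x₂ y₂ : F,
      x₁ ^ k + y₁ ^ k = α ∧ x₂ ^ k + y₂ ^ k = α ∧
      x₁ ^ k ≠ x₂ ^ k ∧ y₁ ^ k ≠ y₂ ^ k)
    (C : Matrix (Fin n) (Fin n) F) (hC : C.BlockTriangular id)
    (hdiag : ∀ i j : Fin n, C i i = C j j)
    (hrowcol :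
      (∃ r : Fin n, ∀ i j : Fin n, i ≠ j → C i j ≠ 0 → i = r) ∨
      (∃ c : Fin n, ∀ i j : Fin n, i ≠ j → C i j ≠ 0 → j = c)) :
    ∃ X Y : Matrix (Fin n) (Fin n) F,
      X.BlockTriangular id ∧ Y.BlockTriangular id ∧ C = X ^ k + Y ^ k := by
  rcases hrowcol with ⟨r, hrow⟩ | ⟨c, hcol⟩
  · obtain ⟨x₁, y₁, x₂, y₂, h₁, h₂, hx, -⟩ := hsol (C r r)
    obtain ⟨d, e, hde, hd⟩ := exists_funs_pow_add_pow_eq_and_pow_ne r h₁ h₂ hx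
    exact Matrix.exists_pow_add_pow_eq_of_offDiag_mem_row hC k r d e
      (fun i => (hdiag i r).trans (hde i).symm) hd hrow
  · obtain ⟨x₁, y₁, x₂, y₂, h₁, h₂, hx, -⟩ := hsol (C c c)
    obtain ⟨d, e, hde, hd⟩ := exists_funs_pow_add_pow_eq_and_pow_ne c h₁ h₂ hx
    exact Matrix.exists_pow_add_pow_eq_of_offDiag_mem_col hC k c d e
      (fun i => (hdiag i c).trans (hde i).symm) hd hcol

/-- Assuming every `α ∈ F_q` has two representations as sums of two `k`-th powers
with distinct `k`-th powers coordinatewise: an upper triangular matrix with constant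
diagonal whose nonzero off-diagonal entries all lie in a single row (or all in a
single column) is a sum of two `k`-th powers of upper triangular matrices. -/
theorem stmt_18 (k n : ℕ) (hk : 2 ≤ k)
    (F : Type*) [Field F] [Fintype F]
    (hsol : ∀ α : F, ∃ x₁ y₁ x₂ y₂ : F,
      x₁ ^ k + y₁ ^ k = α ∧ x₂ ^ k + y₂ ^ k = α ∧
      x₁ ^ k ≠ x₂ ^ k ∧ y₁ ^ k ≠ y₂ ^ k)
    (C : Matrix (Fin n) (Fin n) F) (hC : C.BlockTriangular id)
    (hdiag : ∀ i j : Fin n, C i i = C j j)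
    (hrowcol :
      (∃ r : Fin n, ∀ i j : Fin n, i ≠ j → C i j ≠ 0 → i = r) ∨
      (∃ c : Fin n, ∀ i j : Fin n, i ≠ j → C i j ≠ 0 → j = c)) :
    ∃ X Y : Matrix (Fin n) (Fin n) F,
      X.BlockTriangular id ∧ Y.BlockTriangular id ∧ C = X ^ k + Y ^ k :=
  stmt_18_general k n F hsol C hC hdiag hrowcol
end

section
/- Let k ≥ 2 and suppose that for every α ∈ F_q there exist two pairs (x₁, y₁), (x₂, y₂) ∈ F_q × F_q with x₁^k + y₁^k = α = x₂^k + y₂^k, x₁^k ≠ x₂^k and y₁^k ≠ y₂^k. Let C ∈ T_n(F_q) be a matrix all of whose diagonal entries are equal, and whose nonzero off-diagonal entries lie in pairwise distinct rows and pairwise distinct columns (i.e., if (i,j) ≠ (i',j') with i < j, i' < j', c_{ij} ≠ 0 and c_{i'j'} ≠ 0, then i ≠ i' and j ≠ j'). Then there exist A, B ∈ T_n(F_q) with C = A^k + B^k. -/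
open scoped Classical in
noncomputable def pickColor19 (P : ℕ → ℕ → Prop) (j : ℕ) : Bool :=
  if h : ∃ i, i < j ∧ P i j then !pickColor19 P h.choose else true
termination_by j
decreasing_by exact h.choose_spec.1

lemma pickColor19_edge (P : ℕ → ℕ → Prop) {i j : ℕ} (hij : i < j) (hP : P i j)
    (hu : ∀ i', i' < j → P i' j → i' = i) :
    pickColor19 P j = !pickColor19 P i := by
  rw [pickColor19]
  have h : ∃ a, a < j ∧ P a j := ⟨i, hij, hP⟩
  rw [dif_pos h, hu _ h.choose_spec.1 h.choose_spec.2]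

lemma conjPow19 {R : Type*} [Ring R] (S S' X : R) (h1 : S * S' = 1) (h2 : S' * S = 1)
    (k : ℕ) : (S * X * S') ^ k = S * X ^ k * S' := by
  induction k with
  | zero => simpa using h1.symm
  | succ n ih =>
      rw [pow_succ, ih, pow_succ]
      have : S * X ^ n * S' * (S * X * S') = S * X ^ n * ((S' * S) * (X * S')) := by
        simp only [mul_assoc]
      rw [this, h2, one_mul]
      simp only [mul_assoc]

/-- Assuming every `α ∈ F_q` has two representations as sums of two `k`-th powers
with distinct `k`-th powers coordinatewise: an upper triangular matrix with constant
diagonal whose nonzero off-diagonal entries lie in pairwise distinct rows and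
pairwise distinct columns is a sum of two `k`-th powers of upper triangular
matrices. -/
theorem stmt_19 (k n : ℕ) (hk : 2 ≤ k)
    (F : Type*) [Field F] [Fintype F]
    (hsol : ∀ α : F, ∃ x₁ y₁ x₂ y₂ : F,
      x₁ ^ k + y₁ ^ k = α ∧ x₂ ^ k + y₂ ^ k = α ∧
      x₁ ^ k ≠ x₂ ^ k ∧ y₁ ^ k ≠ y₂ ^ k)
    (C : Matrix (Fin n) (Fin n) F) (hC : C.BlockTriangular id)
    (hdiag : ∀ i j : Fin n, C i i = C j j)
    (hrc : ∀ i j i' j' : Fin n, i < j → i' < j' → C i j ≠ 0 → C i' j' ≠ 0 →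
      (i, j) ≠ (i', j') → i ≠ i' ∧ j ≠ j') :
    ∃ A B : Matrix (Fin n) (Fin n) F,
      A.BlockTriangular id ∧ B.BlockTriangular id ∧ C = A ^ k + B ^ k := by
  classical
  rcases n with _ | m
  · refine ⟨0, 0, fun i j _ => rfl, fun i j _ => rfl, Subsingleton.elim _ _⟩
  set α : F := C 0 0 with hα
  obtain ⟨x, y, x', y', hx, hx', hxx, hyy⟩ := hsol α
  set c : F := x ^ k - x' ^ k with hc
  have hc0 : c ≠ 0 := sub_ne_zero.mpr hxx
  -- the off-diagonal part
  set N : Matrix (Fin (m+1)) (Fin (m+1)) F := C - α • 1 with hN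
  have hNdiag : ∀ i : Fin (m+1), N i i = 0 := by
    intro i
    simp [hN, Matrix.sub_apply, Matrix.smul_apply, Matrix.one_apply_eq, hα, hdiag i 0]
  have hNlt : ∀ i j : Fin (m+1), ¬ i < j → N i j = 0 := by
    intro i j h
    rcases eq_or_lt_of_le (le_of_not_gt h) with h' | h'
    · rw [h']; exact hNdiag i
    · simp [hN, Matrix.sub_apply, hC h', Matrix.smul_apply,
        Matrix.one_apply_ne (ne_of_gt h')]
  have hNeq : ∀ i j : Fin (m+1), i < j → N i j = C i j := by
    intro i j h
    simp [hN, Matrix.sub_apply, Matrix.smul_apply, Matrix.one_apply_ne (ne_of_lt h)]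
  -- the coloring
  set Pr : ℕ → ℕ → Prop := fun a b =>
    ∃ (ha : a < m + 1) (hb : b < m + 1),
      (⟨a, ha⟩ : Fin (m+1)) < ⟨b, hb⟩ ∧ C ⟨a, ha⟩ ⟨b, hb⟩ ≠ 0 with hPr
  set δ : Fin (m+1) → Bool := fun i => pickColor19 Pr i.val with hδ
  have hedge : ∀ i j : Fin (m+1), i < j → C i j ≠ 0 → δ j = !δ i := by
    intro i j hij hne
    have hP : Pr i.val j.val := ⟨i.isLt, j.isLt, by simpa using hij, by simpa using hne⟩
    refine pickColor19_edge Pr (show i.val < j.val from hij) hP ?_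
    rintro a ha ⟨ha1, hb1, hlt, hne'⟩
    by_contra h0
    have hpair : ((⟨a, ha1⟩ : Fin (m+1)), (⟨j.val, hb1⟩ : Fin (m+1))) ≠ (i, j) := by
      intro hcontra
      exact h0 (congrArg (fun p => (p.1 : Fin (m+1)).val) hcontra)
    have h2 := hrc ⟨a, ha1⟩ ⟨j.val, hb1⟩ i j hlt hij hne' (by simpa using hne) hpair
    exact h2.2 (by ext; rfl)
  -- matrices
  set N' : Matrix (Fin (m+1)) (Fin (m+1)) F := c⁻¹ • N with hN'
  have hN'lt : ∀ i j : Fin (m+1), ¬ i < j → N' i j = 0 := by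
    intro i j h; simp [hN', Matrix.smul_apply, hNlt i j h]
  have hN'edge : ∀ i j : Fin (m+1), N' i j ≠ 0 → δ j = !δ i := by
    intro i j h
    by_cases hij : i < j
    · refine hedge i j hij ?_
      intro h0
      exact h (by simp [hN', Matrix.smul_apply, hNeq i j hij, h0])
    · exact absurd (hN'lt i j hij) h
  set dv : Fin (m+1) → F := fun i => if δ i then 1 else 0 with hdv
  set Δ : Matrix (Fin (m+1)) (Fin (m+1)) F := Matrix.diagonal dv with hΔ
  set Pm : Matrix (Fin (m+1)) (Fin (m+1)) F :=
    Matrix.of fun i j => if δ i then N' i j else 0 with hPm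
  set Qm : Matrix (Fin (m+1)) (Fin (m+1)) F :=
    Matrix.of fun i j => if δ i then 0 else N' i j with hQm
  have hPQ : Pm + Qm = N' := by
    ext i j
    by_cases h : δ i <;> simp [hPm, hQm, Matrix.add_apply, h]
  have hΔP : Δ * Pm = Pm := by
    ext i j
    rw [hΔ, Matrix.diagonal_mul]
    by_cases h : δ i <;> simp [hdv, hPm, h]
  have hPΔ : Pm * Δ = 0 := by
    ext i j
    rw [hΔ, Matrix.mul_diagonal]
    by_cases hj : δ j
    · by_cases hi : δ i
      · have : N' i j = 0 := by
          by_contra h0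
          have hbe := hN'edge i j h0
          rw [hj, hi] at hbe
          simp at hbe
        simp [hPm, hi, this]
      · simp [hPm, hi]
    · simp [hdv, hj]
  have hΔQ : Δ * Qm = 0 := by
    ext i j
    rw [hΔ, Matrix.diagonal_mul]
    by_cases hi : δ i
    · simp [hQm, hi]
    · simp [hdv, hi]
  have hQΔ : Qm * Δ = Qm := by
    ext i j
    rw [hΔ, Matrix.mul_diagonal]
    by_cases hj : δ j
    · simp [hdv, hj]
    · by_cases hi : δ i
      · simp [hQm, hi]
      · have : N' i j = 0 := by
          by_contra h0
          have hbe := hN'edge i j h0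
          simp only [Bool.not_eq_true] at hj hi
          rw [hj, hi] at hbe
          simp at hbe
        simp [hdv, hj, hQm, hi, this]
  have hPP : Pm * Pm = 0 := by
    calc Pm * Pm = Pm * (Δ * Pm) := by rw [hΔP]
    _ = (Pm * Δ) * Pm := by rw [mul_assoc]
    _ = 0 := by rw [hPΔ, zero_mul]
  have hQQ : Qm * Qm = 0 := by
    calc Qm * Qm = (Qm * Δ) * Qm := by rw [hQΔ]
    _ = Qm * (Δ * Qm) := by rw [mul_assoc]
    _ = 0 := by rw [hΔQ, mul_zero]
  have hSP1 : (1 - Pm) * (1 + Pm) = 1 := by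
    have h : (1 - Pm) * (1 + Pm) = 1 - Pm * Pm := by noncomm_ring
    rw [h, hPP, sub_zero]
  have hSP2 : (1 + Pm) * (1 - Pm) = 1 := by
    have h : (1 + Pm) * (1 - Pm) = 1 - Pm * Pm := by noncomm_ring
    rw [h, hPP, sub_zero]
  have hSQ1 : (1 - Qm) * (1 + Qm) = 1 := by
    have h : (1 - Qm) * (1 + Qm) = 1 - Qm * Qm := by noncomm_ring
    rw [h, hQQ, sub_zero]
  have hSQ2 : (1 + Qm) * (1 - Qm) = 1 := by
    have h : (1 + Qm) * (1 - Qm) = 1 - Qm * Qm := by noncomm_ring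
    rw [h, hQQ, sub_zero]
  have hconjP : (1 - Pm) * Δ * (1 + Pm) = Δ + Pm := by
    have h : (1 - Pm) * Δ * (1 + Pm)
        = Δ + Δ * Pm - Pm * Δ - Pm * Δ * Pm := by noncomm_ring
    rw [h, hΔP, hPΔ, zero_mul, sub_zero, sub_zero]
  have hconjQ : (1 - Qm) * Δ * (1 + Qm) = Δ - Qm := by
    have h : (1 - Qm) * Δ * (1 + Qm)
        = Δ + Δ * Qm - Qm * Δ - Qm * Δ * Qm := by noncomm_ring
    rw [h, hΔQ, hQΔ, add_zero, hQQ, sub_zero]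
  -- the roots
  set X : Matrix (Fin (m+1)) (Fin (m+1)) F :=
    Matrix.diagonal (fun i => if δ i then x else x') with hX
  set Y : Matrix (Fin (m+1)) (Fin (m+1)) F :=
    Matrix.diagonal (fun i => if δ i then y else y') with hY
  set A : Matrix (Fin (m+1)) (Fin (m+1)) F := (1 - Pm) * X * (1 + Pm) with hA
  set B : Matrix (Fin (m+1)) (Fin (m+1)) F := (1 - Qm) * Y * (1 + Qm) with hB
  have hXk : X ^ k = x' ^ k • (1 : Matrix (Fin (m+1)) (Fin (m+1)) F) + c • Δ := by
    rw [hX, Matrix.diagonal_pow]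
    ext i j
    by_cases hij : i = j
    · subst hij
      by_cases h : δ i <;>
        simp [Matrix.diagonal_apply_eq, Matrix.add_apply, Matrix.smul_apply,
          Matrix.one_apply_eq, hΔ, hdv, h, hc, Pi.pow_apply, smul_eq_mul] <;> ring
    · simp [Matrix.diagonal_apply_ne _ hij, Matrix.add_apply, Matrix.smul_apply,
        Matrix.one_apply_ne hij, hΔ, hdv, smul_eq_mul]
  have hYk : Y ^ k = y' ^ k • (1 : Matrix (Fin (m+1)) (Fin (m+1)) F)
      + (y ^ k - y' ^ k) • Δ := by
    rw [hY, Matrix.diagonal_pow]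
    ext i j
    by_cases hij : i = j
    · subst hij
      by_cases h : δ i <;>
        simp [Matrix.diagonal_apply_eq, Matrix.add_apply, Matrix.smul_apply,
          Matrix.one_apply_eq, hΔ, hdv, h, Pi.pow_apply, smul_eq_mul] <;> ring
    · simp [Matrix.diagonal_apply_ne _ hij, Matrix.add_apply, Matrix.smul_apply,
        Matrix.one_apply_ne hij, hΔ, hdv, smul_eq_mul]
  have hAk : A ^ k = x' ^ k • (1 : Matrix (Fin (m+1)) (Fin (m+1)) F) + c • (Δ + Pm) := by
    rw [hA, conjPow19 _ _ _ hSP1 hSP2, hXk]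
    have e1 : (1 - Pm) * (x' ^ k • (1 : Matrix (Fin (m+1)) (Fin (m+1)) F)) * (1 + Pm)
        = x' ^ k • (1 : Matrix (Fin (m+1)) (Fin (m+1)) F) := by
      rw [mul_smul_comm, smul_mul_assoc, mul_one, hSP1]
    have e2 : (1 - Pm) * (c • Δ) * (1 + Pm) = c • (Δ + Pm) := by
      rw [mul_smul_comm, smul_mul_assoc, hconjP]
    rw [mul_add ((1 : Matrix (Fin (m+1)) (Fin (m+1)) F) - Pm), add_mul, e1, e2]
  have hBk : B ^ k = y' ^ k • (1 : Matrix (Fin (m+1)) (Fin (m+1)) F)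
      + (y ^ k - y' ^ k) • (Δ - Qm) := by
    rw [hB, conjPow19 _ _ _ hSQ1 hSQ2, hYk]
    have e1 : (1 - Qm) * (y' ^ k • (1 : Matrix (Fin (m+1)) (Fin (m+1)) F)) * (1 + Qm)
        = y' ^ k • (1 : Matrix (Fin (m+1)) (Fin (m+1)) F) := by
      rw [mul_smul_comm, smul_mul_assoc, mul_one, hSQ1]
    have e2 : (1 - Qm) * ((y ^ k - y' ^ k) • Δ) * (1 + Qm)
        = (y ^ k - y' ^ k) • (Δ - Qm) := by
      rw [mul_smul_comm, smul_mul_assoc, hconjQ]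
    rw [mul_add ((1 : Matrix (Fin (m+1)) (Fin (m+1)) F) - Qm), add_mul, e1, e2]
  -- triangularity
  have hPmT : Pm.BlockTriangular id := by
    intro i j hij
    have h0 : N' i j = 0 := hN'lt i j (not_lt_of_gt hij)
    rw [hPm]
    show (if δ i then N' i j else 0) = 0
    split <;> simp [h0]
  have hQmT : Qm.BlockTriangular id := by
    intro i j hij
    have h0 : N' i j = 0 := hN'lt i j (not_lt_of_gt hij)
    rw [hQm]
    show (if δ i then 0 else N' i j) = 0
    split <;> simp [h0]
  have hAT : A.BlockTriangular id := by
    rw [hA]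
    exact ((Matrix.blockTriangular_one.sub hPmT).mul
      (Matrix.blockTriangular_diagonal _)).mul (Matrix.blockTriangular_one.add hPmT)
  have hBT : B.BlockTriangular id := by
    rw [hB]
    exact ((Matrix.blockTriangular_one.sub hQmT).mul
      (Matrix.blockTriangular_diagonal _)).mul (Matrix.blockTriangular_one.add hQmT)
  refine ⟨A, B, hAT, hBT, ?_⟩
  rw [hAk, hBk]
  have hcc : y ^ k - y' ^ k = -c := by rw [hc]; linear_combination hx - hx'
  rw [hcc]
  have hmod : x' ^ k • (1 : Matrix (Fin (m+1)) (Fin (m+1)) F) + c • (Δ + Pm)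
      + (y' ^ k • (1 : Matrix (Fin (m+1)) (Fin (m+1)) F) + (-c) • (Δ - Qm))
      = (x' ^ k + y' ^ k) • (1 : Matrix (Fin (m+1)) (Fin (m+1)) F) + c • (Pm + Qm) := by
    module
  rw [hmod, hPQ, hx', hN', smul_smul, mul_inv_cancel₀ hc0, one_smul, hN]
  abel
end
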